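/- arXiv:cs/0605073 — 4 statements merged into one kernel-verified Lean document; each statement's English description precedes it below -/
import Mathlib

section
/- Let d ≥ 1 be an integer, let η₁ > −2, ξ > 0, k_c > 0 and ε > 0 be real numbers. For each integer n ≥ 1 set A_n = ∫₀^{k_c} k^{2n+d+1}/(1 + η₁(kξ)² + (kξ)⁴) dk, and for 0 < r < 1 set u_n(r) = (2π)^{−d/2} r^{2n} |log r|^{1+ε} A_n / (Γ(n+1) Γ(n + d/2)). Then there exists a constant c > 0 such that for every r ∈ (0,1) the series Σ_{n≥1} (−1)^{n+1} u_n(r) converges absolutely and |Σ_{n≥1} (−1)^{n+1} u_n(r)| ≤ c. (This is the analytic core of the theorem that band-limited FGC Spartan spatial random fields have almost surely differentiable sample paths: the quantity ζ_x(r) = −[ΔG_x(0) − ΔG_x(r)] equals this alternating series and hence satisfies ζ_x(r) ≤ c/|log r|^{1+ε} for 0 < r < 1.) -/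
/-!
For `η₁ > -2` the quartic `1 + η₁ t² + t⁴` is bounded below by some `δ > 0`, so
`|A n| ≤ |k_c|^(2n+d+2) / δ`. For `0 < r < 1` and `n ≥ 1`,
`r^(2n) |log r|^(1+ε) ≤ r² |log r|^(1+ε) ≤ ((1+ε)/2)^(1+ε)`, and `Γ(n + d/2) ≥ 1/2`.
Hence the `n`-th term is dominated, uniformly in `r`, by `C (k_c²)ⁿ / n!`, whose series converges.
-/

open Real
open scoped Nat

theorem exists_pos_le_one_add_mul_sq_add_pow_four {η : ℝ} (hη : -2 < η) :
    ∃ δ > 0, ∀ x : ℝ, δ ≤ 1 + η * x ^ 2 + x ^ 4 := by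
  -- complete the square in `x ^ 2`, with `η` replaced by `min η 0 ∈ (-2, 0]`
  refine ⟨1 - min η 0 ^ 2 / 4, ?_, fun x => ?_⟩
  · nlinarith [lt_min hη (show (-2 : ℝ) < 0 by norm_num), min_le_right η 0]
  · nlinarith [sq_nonneg (x ^ 2 + min η 0 / 2),
      mul_le_mul_of_nonneg_right (min_le_left η 0) (sq_nonneg x)]

theorem abs_intervalIntegral_pow_div_le {g : ℝ → ℝ} {δ : ℝ} (hδ : 0 < δ) (hg : ∀ x, δ ≤ g x)
    (b : ℝ) (N : ℕ) : |∫ x in (0 : ℝ)..b, x ^ N / g x| ≤ |b| ^ (N + 1) / δ := by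
  have hbound : ∀ x ∈ Set.uIoc (0 : ℝ) b, ‖x ^ N / g x‖ ≤ |b| ^ N / δ := by
    intro x hx
    have hxb : |x| ≤ |b| := by
      simpa using Set.abs_sub_left_of_mem_uIcc (Set.uIoc_subset_uIcc hx)
    rw [norm_div, norm_pow, norm_eq_abs, norm_eq_abs, abs_of_pos (hδ.trans_le (hg x))]
    exact div_le_div₀ (by positivity) (pow_le_pow_left₀ (abs_nonneg x) hxb N) hδ (hg x)
  calc |∫ x in (0 : ℝ)..b, x ^ N / g x| ≤ |b| ^ N / δ * |b - 0| :=
        intervalIntegral.norm_integral_le_of_norm_le_const hbound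
    _ = |b| ^ (N + 1) / δ := by rw [sub_zero, pow_succ]; ring

theorem abs_integral_pow_div_quartic_le {η δ : ℝ} (hδ : 0 < δ)
    (hden : ∀ x : ℝ, δ ≤ 1 + η * x ^ 2 + x ^ 4) (ξ b : ℝ) (d n : ℕ) :
    |∫ k in (0 : ℝ)..b, k ^ (2 * n + d + 1) / (1 + η * (k * ξ) ^ 2 + (k * ξ) ^ 4)| ≤
      |b| ^ (d + 2) * (b ^ 2) ^ n / δ := by
  rw [← sq_abs, ← pow_mul, ← pow_add, show d + 2 + 2 * n = 2 * n + d + 1 + 1 by ring]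
  exact abs_intervalIntegral_pow_div_le hδ (fun k => hden (k * ξ)) b _

theorem rpow_mul_abs_log_rpow_le {r p s : ℝ} (hr0 : 0 < r) (hr1 : r ≤ 1) (hp : 0 < p)
    (hs : 0 < s) : r ^ p * |log r| ^ s ≤ (s / p) ^ s := by
  have hlog : |log r * r ^ (p / s)| ≤ s / p := by
    simpa using (abs_log_mul_self_rpow_lt r (p / s) hr0 hr1 (by positivity)).le
  calc r ^ p * |log r| ^ s = |log r * r ^ (p / s)| ^ s := by
        rw [abs_mul, abs_of_pos (rpow_pos_of_pos hr0 _), mul_rpow (abs_nonneg _) (by positivity),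
          ← rpow_mul hr0.le, div_mul_cancel₀ p hs.ne', mul_comm]
    _ ≤ (s / p) ^ s := rpow_le_rpow (abs_nonneg _) hlog hs.le

theorem pow_mul_abs_log_rpow_le {r s : ℝ} (hr0 : 0 < r) (hr1 : r ≤ 1) (hs : 0 < s) {n : ℕ}
    (hn : 1 ≤ n) : r ^ (2 * n) * |log r| ^ s ≤ (s / 2) ^ s := by
  calc r ^ (2 * n) * |log r| ^ s ≤ r ^ (2 : ℝ) * |log r| ^ s := by
        rw [rpow_two, pow_mul]
        exact mul_le_mul_of_nonneg_right (pow_le_of_le_one (by positivity)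
          (pow_le_one₀ hr0.le hr1) (by omega)) (by positivity)
    _ ≤ (s / 2) ^ s := rpow_mul_abs_log_rpow_le hr0 hr1 two_pos hs

theorem one_half_le_Gamma {x : ℝ} (hx : 1 ≤ x) : 1 / 2 ≤ Gamma x := by
  have hx0 : 0 < x := by linarith
  have hshift : 1 ≤ x * Gamma x := by
    have : Gamma 2 ≤ Gamma (x + 1) :=
      Gamma_strictMonoOn_Ici.monotoneOn (by simp) (by simp; linarith) (by linarith)
    rwa [Gamma_two, Gamma_add_one hx0.ne'] at this
  rcases le_or_gt 2 x with h2 | h2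
  · have : Gamma 2 ≤ Gamma x := Gamma_strictMonoOn_Ici.monotoneOn (by simp) h2 h2
    rw [Gamma_two] at this
    linarith
  · nlinarith [Gamma_pos_of_pos hx0]

theorem abs_div_Gamma_mul_Gamma_le (y : ℝ) (d : ℕ) {n : ℕ} (hn : 1 ≤ n) :
    |y / (Gamma (n + 1) * Gamma ((n : ℝ) + d / 2))| ≤ 2 * |y| / n ! := by
  have hGamma : 1 / 2 ≤ Gamma ((n : ℝ) + d / 2) :=
    one_half_le_Gamma (le_add_of_le_of_nonneg (by exact_mod_cast hn) (by positivity))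
  have hGamma_pos : 0 < Gamma ((n : ℝ) + d / 2) := by linarith
  rw [Gamma_nat_eq_factorial]
  calc |y / (n ! * Gamma ((n : ℝ) + d / 2))| = |y| / (n ! * Gamma ((n : ℝ) + d / 2)) := by
        rw [abs_div, abs_of_pos (mul_pos (by positivity) hGamma_pos)]
    _ ≤ |y| / (n ! * (1 / 2)) := by gcongr
    _ = 2 * |y| / n ! := by field_simp

theorem fgc_ssrf_sample_path_series_bound_general
    (d : ℕ) (η₁ ξ kc ε : ℝ)
    (hη : η₁ > -2) (hε : 0 < ε)
    (A : ℕ → ℝ)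
    (hA : ∀ n : ℕ, A n =
      ∫ k in (0 : ℝ)..kc,
        k ^ (2 * n + d + 1) / (1 + η₁ * (k * ξ) ^ 2 + (k * ξ) ^ 4))
    (u : ℕ → ℝ → ℝ)
    (hu : ∀ (n : ℕ) (r : ℝ), u n r =
      (2 * π) ^ (-(d : ℝ) / 2) * r ^ (2 * n) * |Real.log r| ^ (1 + ε) * A n /
        (Real.Gamma (n + 1) * Real.Gamma ((n : ℝ) + d / 2))) :
    ∃ c > 0, ∀ r ∈ Set.Ioo (0 : ℝ) 1,
      Summable (fun m : ℕ => |(-1 : ℝ) ^ m * u (m + 1) r|) ∧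
      |∑' m : ℕ, (-1 : ℝ) ^ m * u (m + 1) r| ≤ c := by
  obtain ⟨δ, hδ, hden⟩ := exists_pos_le_one_add_mul_sq_add_pow_four hη
  set P : ℝ := (2 * π) ^ (-(d : ℝ) / 2)
  set C : ℝ := 2 * (P * ((1 + ε) / 2) ^ (1 + ε) * |kc| ^ (d + 2) / δ)
  have hterm : ∀ r ∈ Set.Ioo (0 : ℝ) 1, ∀ n, 1 ≤ n → |u n r| ≤ C * (kc ^ 2) ^ n / n ! := by
    rintro r ⟨hr0, hr1⟩ n hn
    have hAn := hA n ▸ abs_integral_pow_div_quartic_le hδ hden ξ kc d n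
    have hlog := pow_mul_abs_log_rpow_le hr0 hr1.le (by positivity : 0 < 1 + ε) hn
    calc |u n r| ≤ 2 * |P * r ^ (2 * n) * |log r| ^ (1 + ε) * A n| / n ! := by
          rw [hu]; exact abs_div_Gamma_mul_Gamma_le _ d hn
      _ = 2 * (P * (r ^ (2 * n) * |log r| ^ (1 + ε)) * |A n|) / n ! := by
          rw [abs_mul, abs_mul, abs_mul, abs_of_pos (by positivity : 0 < P),
            abs_of_pos (pow_pos hr0 _), abs_of_nonneg (by positivity : 0 ≤ |log r| ^ (1 + ε)),
            mul_assoc P]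
      _ ≤ 2 * (P * ((1 + ε) / 2) ^ (1 + ε) * (|kc| ^ (d + 2) * (kc ^ 2) ^ n / δ)) / n ! := by
          gcongr
      _ = C * (kc ^ 2) ^ n / n ! := by ring
  set B : ℕ → ℝ := fun m => C * (kc ^ 2) ^ (m + 1) / (m + 1)!
  have hB : Summable B := by
    simpa only [B, mul_div_assoc] using
      (summable_nat_add_iff 1).2 ((Real.summable_pow_div_factorial (kc ^ 2)).mul_left C)
  refine ⟨∑' m, B m + 1, by positivity, fun r hr => ?_⟩
  have hbound (m : ℕ) : ‖(-1 : ℝ) ^ m * u (m + 1) r‖ ≤ B m := by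
    simpa [abs_mul] using hterm r hr (m + 1) le_add_self
  exact ⟨hB.of_nonneg_of_le (fun _ => abs_nonneg _) hbound,
    (tsum_of_norm_bounded hB.hasSum hbound).trans (le_add_of_nonneg_right zero_le_one)⟩

/-- Analytic core of sample-path differentiability of band-limited FGC Spartan
random fields: with A_n = ∫₀^{k_c} k^{2n+d+1}/(1 + η₁(kξ)² + (kξ)⁴) dk and
u_n(r) = (2π)^{−d/2} r^{2n} |log r|^{1+ε} A_n / (Γ(n+1) Γ(n+d/2)), there is a
constant c > 0 such that for every 0 < r < 1 the alternating series
Σ_{n≥1} (−1)^{n+1} u_n(r) converges absolutely and its sum is bounded by c in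
absolute value.  (Indexing: the series over n ≥ 1 is written as a sum over
m : ℕ of the term (−1)^{(m+1)+1} u_{m+1}(r) = (−1)^m u_{m+1}(r).) -/
theorem fgc_ssrf_sample_path_series_bound
    (d : ℕ) (hd : 1 ≤ d) (η₁ ξ kc ε : ℝ)
    (hη : η₁ > -2) (hξ : 0 < ξ) (hkc : 0 < kc) (hε : 0 < ε)
    (A : ℕ → ℝ)
    (hA : ∀ n : ℕ, A n =
      ∫ k in (0 : ℝ)..kc,
        k ^ (2 * n + d + 1) / (1 + η₁ * (k * ξ) ^ 2 + (k * ξ) ^ 4))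
    (u : ℕ → ℝ → ℝ)
    (hu : ∀ (n : ℕ) (r : ℝ), u n r =
      (2 * π) ^ (-(d : ℝ) / 2) * r ^ (2 * n) * |Real.log r| ^ (1 + ε) * A n /
        (Real.Gamma (n + 1) * Real.Gamma ((n : ℝ) + d / 2))) :
    ∃ c > 0, ∀ r ∈ Set.Ioo (0 : ℝ) 1,
      Summable (fun m : ℕ => |(-1 : ℝ) ^ m * u (m + 1) r|) ∧
      |∑' m : ℕ, (-1 : ℝ) ^ m * u (m + 1) r| ≤ c :=
  fgc_ssrf_sample_path_series_bound_general d η₁ ξ kc ε hη hε A hA u hu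
end

section
/- Let η₁ be a real number with −2 < η₁ < 2, set β₁ = √(2−η₁)/2 and β₂ = √(2+η₁)/2, and let h ≥ 0. Then ∫₀^∞ cos(hx)/(x⁴ + η₁x² + 1) dx = π e^{−hβ₂} [cos(hβ₁)/(4β₂) + sin(hβ₁)/(4β₁)]. (This is the infinite-band one-dimensional FGC-SSRF covariance for |η₁| < 2: G_x(r) = η₀ e^{−hβ₂}[cos(hβ₁)/(4β₂) + sin(hβ₁)/(4β₁)] with h = |r|/ξ, a class of positive definite covariance functions in d = 1.) -/
open MeasureTheory Real

open Set Filter Complex Topology FourierTransform in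
lemma fgc_aux_integrableOn_cexp {z : ℂ} (hz : 0 < z.re) :
    IntegrableOn (fun t : ℝ => Complex.exp (-(z * t))) (Set.Ioi (0:ℝ)) := by
  apply Integrable.mono' (exp_neg_integrableOn_Ioi 0 hz)
  · exact (Complex.continuous_exp.comp
      ((continuous_const.mul Complex.continuous_ofReal).neg)).aestronglyMeasurable
  · filter_upwards with t
    simp [Complex.norm_exp, Complex.neg_re, Complex.mul_re, neg_mul]

open Set Filter Complex Topology FourierTransform in
lemma fgc_aux_integral_cexp {z : ℂ} (hz : 0 < z.re) :
    ∫ t in Set.Ioi (0:ℝ), Complex.exp (-(z * t)) = z⁻¹ := by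
  have hne : z ≠ 0 := fun h => by simp [h] at hz
  have h1 := intervalIntegral_tendsto_integral_Ioi 0 (fgc_aux_integrableOn_cexp hz) tendsto_id
  simp only [id] at h1
  have key : ∀ T : ℝ, (∫ t in (0:ℝ)..T, Complex.exp (-(z * t)))
      = (Complex.exp (-z * T) - 1) / (-z) := by
    intro T
    have := integral_exp_mul_complex (a := 0) (b := T) (neg_ne_zero.mpr hne)
    simpa [neg_mul] using this
  have h2 : Tendsto (fun T : ℝ => ∫ t in (0:ℝ)..T, Complex.exp (-(z * t)))
      atTop (𝓝 z⁻¹) := by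
    simp only [key]
    have hexp : Tendsto (fun T : ℝ => Complex.exp (-z * T)) atTop (𝓝 0) := by
      rw [tendsto_zero_iff_norm_tendsto_zero]
      have : (fun T : ℝ => ‖Complex.exp (-z * T)‖) = fun T => Real.exp (-z.re * T) := by
        funext T
        simp [Complex.norm_exp, Complex.neg_re, Complex.mul_re]
      rw [this]
      exact Real.tendsto_exp_atBot.comp (tendsto_id.const_mul_atTop_of_neg (by linarith))
    have h3 : Tendsto (fun T : ℝ => (Complex.exp (-z * T) - 1) / (-z)) atTop
        (𝓝 ((0 - 1) / (-z))) := (hexp.sub (tendsto_const_nhds (x := (1:ℂ)))).div_const (-z)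
    convert h3 using 2
    field_simp
    ring
  exact tendsto_nhds_unique h1 h2

open Set Filter Complex Topology FourierTransform in
lemma fgc_aux_integrable_exp_abs {b : ℝ} (hb : 0 < b) :
    Integrable (fun t : ℝ => Real.exp (-b * |t|)) := by
  have hIoi : IntegrableOn (fun t : ℝ => Real.exp (-b * |t|)) (Set.Ioi 0) :=
    (exp_neg_integrableOn_Ioi 0 hb).congr_fun
      (fun t ht => by rw [abs_of_pos ht]) measurableSet_Ioi
  rw [← integrableOn_univ, ← Set.Iic_union_Ioi (a := (0:ℝ)), integrableOn_union]
  refine ⟨?_, hIoi⟩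
  rw [← (Measure.measurePreserving_neg (volume : Measure ℝ)).integrableOn_comp_preimage
      (Homeomorph.neg ℝ).measurableEmbedding]
  simp only [Function.comp_def, abs_neg, neg_preimage, neg_Iic, neg_zero]
  rw [integrableOn_Ici_iff_integrableOn_Ioi]
  exact hIoi

lemma fgc_integral_ofReal {f : ℝ → ℝ} {μ : MeasureTheory.Measure ℝ} :
    ∫ x, ((f x : ℝ) : ℂ) ∂μ = ((∫ x, f x ∂μ : ℝ) : ℂ) :=
  _root_.integral_ofReal

/-- The candidate covariance function, as a complex-valued function on `ℝ`. -/
noncomputable def fgcAuxG (β₁ β₂ : ℝ) (t : ℝ) : ℂ :=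
  (Complex.I * ((β₂:ℂ) - β₁ * Complex.I) * Complex.exp (-(((β₂:ℂ) + β₁ * Complex.I) * |t|))
    - Complex.I * ((β₂:ℂ) + β₁ * Complex.I) * Complex.exp (-(((β₂:ℂ) - β₁ * Complex.I) * |t|)))
    / (2 * (4 * (β₁:ℂ) * β₂))

open Set Filter Complex Topology FourierTransform in
lemma fgcAuxG_continuous (β₁ β₂ : ℝ) : Continuous (fgcAuxG β₁ β₂) := by
  unfold fgcAuxG
  apply Continuous.div_const
  apply Continuous.sub
  · exact continuous_const.mul (Complex.continuous_exp.comp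
      ((continuous_const.mul (Complex.continuous_ofReal.comp _root_.continuous_abs)).neg))
  · exact continuous_const.mul (Complex.continuous_exp.comp
      ((continuous_const.mul (Complex.continuous_ofReal.comp _root_.continuous_abs)).neg))

open Set Filter Complex Topology FourierTransform in
lemma fgcAuxG_integrable (β₁ β₂ : ℝ) (hb1 : 0 < β₁) (hb2 : 0 < β₂) :
    Integrable (fgcAuxG β₁ β₂) := by
  set A : ℂ := (β₂:ℂ) + β₁ * Complex.I with hA
  set A' : ℂ := (β₂:ℂ) - β₁ * Complex.I with hA'
  have hnorm : ∀ (w : ℂ) (s : ℝ), w.re = β₂ → ‖Complex.exp (-(w * s))‖ = Real.exp (-β₂ * s) := by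
    intro w s hw
    simp [Complex.norm_exp, Complex.neg_re, Complex.mul_re, hw]
  apply Integrable.mono'
    ((fgc_aux_integrable_exp_abs hb2).const_mul
      ((‖A'‖ + ‖A‖) / ‖(2 * (4 * (β₁:ℂ) * β₂) : ℂ)‖))
  · exact (fgcAuxG_continuous β₁ β₂).aestronglyMeasurable
  · filter_upwards with t
    have hAre : A.re = β₂ := by
      simp [hA, Complex.add_re, Complex.ofReal_re, Complex.mul_re, Complex.ofReal_im,
        Complex.I_re, Complex.I_im]
    have hA're : A'.re = β₂ := by
      simp [hA', Complex.sub_re, Complex.ofReal_re, Complex.mul_re, Complex.ofReal_im,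
        Complex.I_re, Complex.I_im]
    unfold fgcAuxG
    rw [norm_div]
    have hb : ‖Complex.I * A' * Complex.exp (-(A * |t|))
        - Complex.I * A * Complex.exp (-(A' * |t|))‖
        ≤ (‖A'‖ + ‖A‖) * Real.exp (-β₂ * |t|) := by
      calc ‖Complex.I * A' * Complex.exp (-(A * |t|))
          - Complex.I * A * Complex.exp (-(A' * |t|))‖
          ≤ ‖Complex.I * A' * Complex.exp (-(A * |t|))‖
            + ‖Complex.I * A * Complex.exp (-(A' * |t|))‖ := norm_sub_le _ _
        _ = ‖A'‖ * Real.exp (-β₂ * |t|)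
            + ‖A‖ * Real.exp (-β₂ * |t|) := by
          rw [norm_mul, norm_mul, norm_mul, norm_mul, hnorm A |t| hAre, hnorm A' |t| hA're]
          simp
        _ = (‖A'‖ + ‖A‖) * Real.exp (-β₂ * |t|) := by ring
    calc ‖Complex.I * A' * Complex.exp (-(A * |t|))
          - Complex.I * A * Complex.exp (-(A' * |t|))‖ / ‖(2 * (4 * (β₁:ℂ) * β₂) : ℂ)‖
        ≤ ((‖A'‖ + ‖A‖) * Real.exp (-β₂ * |t|))
            / ‖(2 * (4 * (β₁:ℂ) * β₂) : ℂ)‖ := by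
          gcongr
      _ = (‖A'‖ + ‖A‖) / ‖(2 * (4 * (β₁:ℂ) * β₂) : ℂ)‖
            * Real.exp (-β₂ * |t|) := by
          ring

open Set Filter Complex Topology FourierTransform in
lemma fgcAuxG_fourier (η₁ β₁ β₂ : ℝ) (hb1 : 0 < β₁) (hb2 : 0 < β₂)
    (hb1sq : β₁^2 = (2 - η₁)/4) (hb2sq : β₂^2 = (2 + η₁)/4) (x : ℝ) :
    𝓕 (fgcAuxG β₁ β₂) x
      = ((((2*π*x)^4 + η₁*(2*π*x)^2 + 1 : ℝ)) : ℂ)⁻¹ := by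
  set u : ℝ := 2*π*x with hu
  set A : ℂ := (β₂:ℂ) + β₁ * Complex.I with hA
  set A' : ℂ := (β₂:ℂ) - β₁ * Complex.I with hA'
  set K2 : ℂ := 2 * (4 * (β₁:ℂ) * β₂) with hK2
  have simpre : ∀ r s : ℝ, ((r:ℂ) + s * Complex.I).re = r := by
    intro r s
    simp [Complex.add_re, Complex.ofReal_re, Complex.mul_re, Complex.ofReal_im,
      Complex.I_re, Complex.I_im]
  have simpre' : ∀ r s : ℝ, ((r:ℂ) - s * Complex.I).re = r := by
    intro r s
    simp [Complex.sub_re, Complex.ofReal_re, Complex.mul_re, Complex.ofReal_im,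
      Complex.I_re, Complex.I_im]
  -- real parts of the four exponents
  have hre1 : (A + u * Complex.I).re = β₂ := by
    rw [show A + (u:ℂ) * Complex.I = (β₂:ℂ) + ((β₁ + u : ℝ) : ℂ) * Complex.I by
      rw [hA]; push_cast; ring, simpre]
  have hre2 : (A - u * Complex.I).re = β₂ := by
    rw [show A - (u:ℂ) * Complex.I = (β₂:ℂ) + ((β₁ - u : ℝ) : ℂ) * Complex.I by
      rw [hA]; push_cast; ring, simpre]
  have hre3 : (A' + u * Complex.I).re = β₂ := by
    rw [show A' + (u:ℂ) * Complex.I = (β₂:ℂ) + ((u - β₁ : ℝ) : ℂ) * Complex.I by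
      rw [hA']; push_cast; ring, simpre]
  have hre4 : (A' - u * Complex.I).re = β₂ := by
    rw [show A' - (u:ℂ) * Complex.I = (β₂:ℂ) + ((-u - β₁ : ℝ) : ℂ) * Complex.I by
      rw [hA']; push_cast; ring, simpre]
  have hgint := fgcAuxG_integrable β₁ β₂ hb1 hb2
  rw [Real.fourier_real_eq_integral_exp_smul]
  simp only [smul_eq_mul]
  have hWmeas : AEStronglyMeasurable (fun t : ℝ => Complex.exp (↑(-2*π*t*x) * Complex.I))
      (volume : Measure ℝ) := by
    apply Continuous.aestronglyMeasurable
    exact Complex.continuous_exp.comp ((Complex.continuous_ofReal.comp (by continuity)).mul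
      continuous_const)
  have hWbd : ∃ C, ∀ t : ℝ, ‖Complex.exp (↑(-2*π*t*x) * Complex.I)‖ ≤ C := by
    refine ⟨1, fun t => ?_⟩
    rw [Complex.norm_exp_ofReal_mul_I]
  have hgi : Integrable (fun t : ℝ => Complex.exp (↑(-2*π*t*x) * Complex.I) * fgcAuxG β₁ β₂ t) :=
    hgint.bdd_mul hWmeas (ae_of_all _ hWbd.choose_spec)
  rw [← intervalIntegral.integral_Iic_add_Ioi (b := (0:ℝ)) hgi.integrableOn hgi.integrableOn]
  have hneg : (∫ t in Iic (0:ℝ), Complex.exp (↑(-2*π*t*x) * Complex.I) * fgcAuxG β₁ β₂ t)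
      = ∫ t in Ioi (0:ℝ), Complex.exp (↑(-2*π*(-t)*x) * Complex.I) * fgcAuxG β₁ β₂ (-t) := by
    have := integral_comp_neg_Ioi (0:ℝ)
      (fun t : ℝ => Complex.exp (↑(-2*π*t*x) * Complex.I) * fgcAuxG β₁ β₂ t)
    rw [neg_zero] at this
    exact this.symm
  rw [hneg, ← integral_add ((hgi.comp_neg).integrableOn) hgi.integrableOn]
  have hpt : ∀ t ∈ Ioi (0:ℝ),
      (Complex.exp (↑(-2*π*(-t)*x) * Complex.I) * fgcAuxG β₁ β₂ (-t)
        + Complex.exp (↑(-2*π*t*x) * Complex.I) * fgcAuxG β₁ β₂ t)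
      = Complex.I * A' / K2 * (Complex.exp (-((A + u * Complex.I) * t))
            + Complex.exp (-((A - u * Complex.I) * t)))
        - Complex.I * A / K2 * (Complex.exp (-((A' + u * Complex.I) * t))
            + Complex.exp (-((A' - u * Complex.I) * t))) := by
    intro t ht
    have habs1 : |(-t)| = t := by rw [abs_neg, abs_of_pos ht]
    have habs2 : |t| = t := abs_of_pos ht
    unfold fgcAuxG
    rw [habs1, habs2, ← hA, ← hA', ← hK2]
    have m1 : Complex.exp (-((A + ↑u * Complex.I) * t))
        = Complex.exp (↑(-2*π*t*x) * Complex.I) * Complex.exp (-(A * t)) := by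
      rw [← Complex.exp_add]; congr 1; rw [hu]; push_cast; ring
    have m2 : Complex.exp (-((A - ↑u * Complex.I) * t))
        = Complex.exp (↑(-2*π*(-t)*x) * Complex.I) * Complex.exp (-(A * t)) := by
      rw [← Complex.exp_add]; congr 1; rw [hu]; push_cast; ring
    have m3 : Complex.exp (-((A' + ↑u * Complex.I) * t))
        = Complex.exp (↑(-2*π*t*x) * Complex.I) * Complex.exp (-(A' * t)) := by
      rw [← Complex.exp_add]; congr 1; rw [hu]; push_cast; ring
    have m4 : Complex.exp (-((A' - ↑u * Complex.I) * t))
        = Complex.exp (↑(-2*π*(-t)*x) * Complex.I) * Complex.exp (-(A' * t)) := by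
      rw [← Complex.exp_add]; congr 1; rw [hu]; push_cast; ring
    rw [m1, m2, m3, m4]
    ring
  rw [setIntegral_congr_fun measurableSet_Ioi hpt]
  have I1 : IntegrableOn (fun t : ℝ => Complex.exp (-((A + u * Complex.I) * t))) (Ioi 0) :=
    fgc_aux_integrableOn_cexp (by rw [hre1]; exact hb2)
  have I2 : IntegrableOn (fun t : ℝ => Complex.exp (-((A - u * Complex.I) * t))) (Ioi 0) :=
    fgc_aux_integrableOn_cexp (by rw [hre2]; exact hb2)
  have I3 : IntegrableOn (fun t : ℝ => Complex.exp (-((A' + u * Complex.I) * t))) (Ioi 0) :=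
    fgc_aux_integrableOn_cexp (by rw [hre3]; exact hb2)
  have I4 : IntegrableOn (fun t : ℝ => Complex.exp (-((A' - u * Complex.I) * t))) (Ioi 0) :=
    fgc_aux_integrableOn_cexp (by rw [hre4]; exact hb2)
  have J1 : IntegrableOn (fun t : ℝ => Complex.I * A' / K2
      * (Complex.exp (-((A + u * Complex.I) * t)) + Complex.exp (-((A - u * Complex.I) * t))))
      (Ioi 0) := (I1.add I2).const_mul _
  have J2 : IntegrableOn (fun t : ℝ => Complex.I * A / K2
      * (Complex.exp (-((A' + u * Complex.I) * t)) + Complex.exp (-((A' - u * Complex.I) * t))))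
      (Ioi 0) := (I3.add I4).const_mul _
  rw [integral_sub J1 J2,
    integral_const_mul, integral_const_mul, integral_add I1 I2, integral_add I3 I4,
    fgc_aux_integral_cexp (by rw [hre1]; exact hb2),
    fgc_aux_integral_cexp (by rw [hre2]; exact hb2),
    fgc_aux_integral_cexp (by rw [hre3]; exact hb2),
    fgc_aux_integral_cexp (by rw [hre4]; exact hb2)]
  -- now pure algebra
  have hcast : (((2*π*x)^4 + η₁*(2*π*x)^2 + 1 : ℝ) : ℂ)
      = (u:ℂ)^4 + (η₁:ℂ) * (u:ℂ)^2 + 1 := by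
    rw [hu]; push_cast; ring
  rw [hcast]
  have hb1c : ((β₁:ℂ))^2 = (2 - (η₁:ℂ))/4 := by
    have := congrArg (Complex.ofReal) hb1sq; push_cast at this; exact_mod_cast hb1sq
  have hb2c : ((β₂:ℂ))^2 = (2 + (η₁:ℂ))/4 := by
    have := congrArg (Complex.ofReal) hb2sq; push_cast at this; exact_mod_cast hb2sq
  have hsumc : ((β₁:ℂ))^2 + ((β₂:ℂ))^2 = 1 := by
    rw [hb1c, hb2c]; ring
  have hb1ne : ((β₁:ℂ)) ≠ 0 := Complex.ofReal_ne_zero.mpr hb1.ne'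
  have hb2ne : ((β₂:ℂ)) ≠ 0 := Complex.ofReal_ne_zero.mpr hb2.ne'
  have hne_of_re : ∀ w : ℂ, w.re = β₂ → w ≠ 0 := by
    intro w hw h0
    rw [h0] at hw
    simp only [Complex.zero_re] at hw
    exact hb2.ne' hw.symm
  have n1 : A + u * Complex.I ≠ 0 := hne_of_re _ hre1
  have n2 : A - u * Complex.I ≠ 0 := hne_of_re _ hre2
  have n3 : A' + u * Complex.I ≠ 0 := hne_of_re _ hre3
  have n4 : A' - u * Complex.I ≠ 0 := hne_of_re _ hre4
  set U : ℂ := ((u:ℝ) : ℂ) with hU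
  set b1 : ℂ := ((β₁:ℝ) : ℂ)
  set b2 : ℂ := ((β₂:ℝ) : ℂ)
  have s1 : (A + U*Complex.I)*(A - U*Complex.I) = A^2 + U^2 := by
    linear_combination (-(U^2))*Complex.I_sq
  have s2 : (A' + U*Complex.I)*(A' - U*Complex.I) = A'^2 + U^2 := by
    linear_combination (-(U^2))*Complex.I_sq
  have hAA' : A*A' = 1 := by
    rw [hA, hA']; linear_combination (-(b1^2))*Complex.I_sq + hsumc
  have h1 : A^2 + A'^2 = (η₁:ℂ) := by
    rw [hA, hA']; linear_combination (2*b1^2)*Complex.I_sq + 2*hb2c - 2*hb1c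
  have hfact : (A^2+U^2)*(A'^2+U^2) = U^4 + (η₁:ℂ)*U^2 + 1 := by
    linear_combination U^2*h1 + (A*A'+1)*hAA'
  have hnum : Complex.I*A'*(2*A)*(A'^2+U^2) - Complex.I*A*(2*A')*(A^2+U^2)
      = 8*b1*b2 := by
    rw [hA, hA']
    linear_combination (-8*b1*b2*(b2^2 + b1^2*(1-Complex.I^2)))*Complex.I_sq + (8*b1*b2)*hsumc
  have d1 : A^2 + U^2 ≠ 0 := by rw [← s1]; exact mul_ne_zero n1 n2
  have d2 : A'^2 + U^2 ≠ 0 := by rw [← s2]; exact mul_ne_zero n3 n4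
  have r1 : (A + U*Complex.I)⁻¹ + (A - U*Complex.I)⁻¹ = 2*A/(A^2+U^2) := by
    rw [inv_add_inv n1 n2, s1]; congr 1; ring
  have r2 : (A' + U*Complex.I)⁻¹ + (A' - U*Complex.I)⁻¹ = 2*A'/(A'^2+U^2) := by
    rw [inv_add_inv n3 n4, s2]; congr 1; ring
  rw [r1, r2]
  have hK2ne : K2 ≠ 0 := by
    rw [hK2]
    exact mul_ne_zero two_ne_zero (mul_ne_zero (mul_ne_zero (by norm_num : (4:ℂ) ≠ 0) hb1ne) hb2ne)
  rw [div_mul_div_comm, div_mul_div_comm,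
    div_sub_div _ _ (mul_ne_zero hK2ne d1) (mul_ne_zero hK2ne d2)]
  have e1 : Complex.I*A'*(2*A)*(K2*(A'^2+U^2)) - K2*(A^2+U^2)*(Complex.I*A*(2*A'))
      = K2 * (8*b1*b2) := by linear_combination K2*hnum
  rw [e1]
  have e2 : K2*(A^2+U^2)*(K2*(A'^2+U^2)) = K2*(8*b1*b2)*(U^4+(η₁:ℂ)*U^2+1) := by
    rw [hK2]; linear_combination (2 * (4 * b1 * b2))*(8*b1*b2)*hfact
  rw [e2]
  exact div_mul_cancel_left₀ (mul_ne_zero hK2ne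
    (mul_ne_zero (mul_ne_zero (by norm_num : (8:ℂ) ≠ 0) hb1ne) hb2ne)) _

open Set Filter Complex Topology FourierTransform in
lemma fgcAuxG_value (β₁ β₂ h : ℝ) (hb1 : 0 < β₁) (hb2 : 0 < β₂) (hh : 0 ≤ h) :
    fgcAuxG β₁ β₂ h
      = ((Real.exp (-h*β₂) * (Real.cos (h*β₁)/(4*β₂) + Real.sin (h*β₁)/(4*β₁)) : ℝ) : ℂ) := by
  unfold fgcAuxG
  rw [_root_.abs_of_nonneg hh]
  have e1 : -(((β₂:ℂ) + β₁ * Complex.I) * h)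
      = ((-h*β₂ : ℝ) : ℂ) + ((-(h*β₁) : ℝ) : ℂ) * Complex.I := by push_cast; ring
  have e2 : -(((β₂:ℂ) - β₁ * Complex.I) * h)
      = ((-h*β₂ : ℝ) : ℂ) + (((h*β₁) : ℝ) : ℂ) * Complex.I := by push_cast; ring
  rw [e1, e2, Complex.exp_add, Complex.exp_add, Complex.exp_mul_I, Complex.exp_mul_I,
    ← Complex.ofReal_cos, ← Complex.ofReal_sin, ← Complex.ofReal_cos, ← Complex.ofReal_sin,
    Real.cos_neg, Real.sin_neg, ← Complex.ofReal_exp]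
  have hb1ne : ((β₁:ℝ):ℂ) ≠ 0 := Complex.ofReal_ne_zero.mpr hb1.ne'
  have hb2ne : ((β₂:ℝ):ℂ) ≠ 0 := Complex.ofReal_ne_zero.mpr hb2.ne'
  push_cast
  rw [div_eq_iff (by
    exact mul_ne_zero two_ne_zero
      (mul_ne_zero (mul_ne_zero (by norm_num : (4:ℂ) ≠ 0) hb1ne) hb2ne))]
  field_simp
  ring_nf
  simp only [Complex.I_sq]
  ring

open Set Filter Complex Topology FourierTransform in
lemma fgc_Pi_lower (η₁ : ℝ) (hη : |η₁| < 2) (x : ℝ) :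
    (2 - |η₁|)/4 * (1 + x^2) ≤ (2*π*x)^4 + η₁*(2*π*x)^2 + 1 := by
  have h1 : x^2 ≤ (2*π*x)^2 := by
    nlinarith [sq_nonneg (π*x - 3*x),
      mul_nonneg (by linarith [Real.pi_gt_three] : (0:ℝ) ≤ π - 3) (sq_nonneg x), sq_nonneg x]
  nlinarith [mul_nonneg (abs_nonneg η₁) (sq_nonneg ((2*π*x)^2 - 1)),
    mul_nonneg (by linarith : (0:ℝ) ≤ 2 - |η₁|) (sq_nonneg ((2*π*x)^2 - 1/4)),
    neg_abs_le η₁, sq_nonneg (2*π*x), abs_nonneg η₁,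
    mul_nonneg (by linarith [neg_abs_le η₁] : (0:ℝ) ≤ η₁ + |η₁|) (sq_nonneg (2*π*x))]

open Set Filter Complex Topology FourierTransform in
lemma fgc_FT_integrable (η₁ : ℝ) (hη : |η₁| < 2) :
    Integrable (fun x : ℝ => ((((2*π*x)^4 + η₁*(2*π*x)^2 + 1 : ℝ)) : ℂ)⁻¹) := by
  have hc : (0:ℝ) < (2 - |η₁|)/4 := by linarith
  have hpos : ∀ x : ℝ, (0:ℝ) < (2*π*x)^4 + η₁*(2*π*x)^2 + 1 := by
    intro x
    calc (0:ℝ) < (2 - |η₁|)/4 * (1 + x^2) := by positivity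
      _ ≤ _ := fgc_Pi_lower η₁ hη x
  apply Integrable.mono' (integrable_inv_one_add_sq.const_mul (((2 - |η₁|)/4)⁻¹))
  · apply Continuous.aestronglyMeasurable
    apply Continuous.inv₀
    · exact Complex.continuous_ofReal.comp (by continuity)
    · intro x
      exact Complex.ofReal_ne_zero.mpr (hpos x).ne'
  · filter_upwards with x
    rw [norm_inv, Complex.norm_real, Real.norm_eq_abs, _root_.abs_of_pos (hpos x), ← mul_inv]
    apply inv_anti₀ (by positivity)
    exact fgc_Pi_lower η₁ hη x

open Set Filter Complex Topology FourierTransform in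
/-- Infinite-band 1D FGC-SSRF covariance for |η₁| < 2: with β₁ = √(2−η₁)/2,
β₂ = √(2+η₁)/2 and h ≥ 0,
∫₀^∞ cos(hx)/(x⁴ + η₁x² + 1) dx = π e^{−hβ₂}[cos(hβ₁)/(4β₂) + sin(hβ₁)/(4β₁)]. -/
theorem fgc_ssrf_covariance_one_dim_abs_lt_two
    (η₁ : ℝ) (hη : |η₁| < 2)
    (β₁ β₂ : ℝ) (hβ₁ : β₁ = Real.sqrt (2 - η₁) / 2) (hβ₂ : β₂ = Real.sqrt (2 + η₁) / 2)
    (h : ℝ) (hh : 0 ≤ h) :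
    ∫ x in Set.Ioi (0 : ℝ), Real.cos (h * x) / (x ^ 4 + η₁ * x ^ 2 + 1) =
      π * Real.exp (-h * β₂) *
        (Real.cos (h * β₁) / (4 * β₂) + Real.sin (h * β₁) / (4 * β₁)) := by
  have hm2 : -2 < η₁ := (abs_lt.mp hη).1
  have hp2 : η₁ < 2 := (abs_lt.mp hη).2
  have h2m : (0:ℝ) < 2 - η₁ := by linarith
  have h2p : (0:ℝ) < 2 + η₁ := by linarith
  have hb1 : 0 < β₁ := by rw [hβ₁]; positivity
  have hb2 : 0 < β₂ := by rw [hβ₂]; positivity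
  have hb1sq : β₁^2 = (2 - η₁)/4 := by
    rw [hβ₁, div_pow, Real.sq_sqrt h2m.le]; norm_num
  have hb2sq : β₂^2 = (2 + η₁)/4 := by
    rw [hβ₂, div_pow, Real.sq_sqrt h2p.le]; norm_num
  have hFg : 𝓕 (fgcAuxG β₁ β₂)
      = fun x : ℝ => ((((2*π*x)^4 + η₁*(2*π*x)^2 + 1 : ℝ)) : ℂ)⁻¹ :=
    funext (fgcAuxG_fourier η₁ β₁ β₂ hb1 hb2 hb1sq hb2sq)
  have hFgint : Integrable (𝓕 (fgcAuxG β₁ β₂)) := by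
    rw [show (𝓕 (fgcAuxG β₁ β₂)) = 𝓕 (fgcAuxG β₁ β₂) from rfl, hFg]
    exact fgc_FT_integrable η₁ hη
  have hinv := (fgcAuxG_continuous β₁ β₂).fourierInv_fourier_eq
    (fgcAuxG_integrable β₁ β₂ hb1 hb2) hFgint
  have hkey : 𝓕⁻ (𝓕 (fgcAuxG β₁ β₂)) h = fgcAuxG β₁ β₂ h := congrFun hinv h
  rw [show (𝓕 (fgcAuxG β₁ β₂)) = _ from hFg,
    Real.fourierInv_eq_fourier_neg,
    Real.fourier_real_eq_integral_exp_smul] at hkey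
  simp only [smul_eq_mul] at hkey
  have harg : ∀ v : ℝ, ((-2*π*v*(-h) : ℝ) : ℂ) = ((2*π*v*h : ℝ) : ℂ) :=
    fun v => congrArg _ (by ring)
  simp only [harg] at hkey
  -- integrability of the integrand
  have hQint : Integrable (fun v : ℝ => Complex.exp (((2*π*v*h : ℝ) : ℂ) * Complex.I)
      * ((((2*π*v)^4 + η₁*(2*π*v)^2 + 1 : ℝ)) : ℂ)⁻¹) := by
    apply (fgc_FT_integrable η₁ hη).bdd_mul
    · apply Continuous.aestronglyMeasurable
      exact Complex.continuous_exp.comp ((Complex.continuous_ofReal.comp (by continuity)).mul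
        continuous_const)
    · exact ae_of_all _ fun v => (Complex.norm_exp_ofReal_mul_I _).le
  rw [← intervalIntegral.integral_Iic_add_Ioi (b := (0:ℝ))
    hQint.integrableOn hQint.integrableOn] at hkey
  have hneg : (∫ v in Iic (0:ℝ), Complex.exp (((2*π*v*h : ℝ) : ℂ) * Complex.I)
        * ((((2*π*v)^4 + η₁*(2*π*v)^2 + 1 : ℝ)) : ℂ)⁻¹)
      = ∫ v in Ioi (0:ℝ), Complex.exp (((2*π*(-v)*h : ℝ) : ℂ) * Complex.I)
        * ((((2*π*(-v))^4 + η₁*(2*π*(-v))^2 + 1 : ℝ)) : ℂ)⁻¹ := by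
    have := integral_comp_neg_Ioi (0:ℝ)
      (fun v : ℝ => Complex.exp (((2*π*v*h : ℝ) : ℂ) * Complex.I)
        * ((((2*π*v)^4 + η₁*(2*π*v)^2 + 1 : ℝ)) : ℂ)⁻¹)
    rw [neg_zero] at this
    exact this.symm
  rw [hneg, ← integral_add (hQint.comp_neg).integrableOn hQint.integrableOn] at hkey
  have hsym : ∀ v ∈ Ioi (0:ℝ),
      (Complex.exp (((2*π*(-v)*h : ℝ) : ℂ) * Complex.I)
          * ((((2*π*(-v))^4 + η₁*(2*π*(-v))^2 + 1 : ℝ)) : ℂ)⁻¹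
        + Complex.exp (((2*π*v*h : ℝ) : ℂ) * Complex.I)
          * ((((2*π*v)^4 + η₁*(2*π*v)^2 + 1 : ℝ)) : ℂ)⁻¹)
      = ((2 * Real.cos (2*π*v*h) * (((2*π*v)^4 + η₁*(2*π*v)^2 + 1))⁻¹ : ℝ) : ℂ) := by
    intro v hv
    have hPsym : ((2*π*(-v))^4 + η₁*(2*π*(-v))^2 + 1 : ℝ)
        = ((2*π*v)^4 + η₁*(2*π*v)^2 + 1 : ℝ) := by ring
    rw [hPsym, show ((2*π*(-v)*h : ℝ) : ℂ) = -(((2*π*v*h : ℝ) : ℂ)) by push_cast; ring]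
    have hcos := Complex.two_cos (x := (((2*π*v*h : ℝ) : ℂ)))
    have : Complex.exp (-(((2*π*v*h : ℝ) : ℂ)) * Complex.I)
          * ((((2*π*v)^4 + η₁*(2*π*v)^2 + 1 : ℝ)) : ℂ)⁻¹
        + Complex.exp ((((2*π*v*h : ℝ) : ℂ)) * Complex.I)
          * ((((2*π*v)^4 + η₁*(2*π*v)^2 + 1 : ℝ)) : ℂ)⁻¹
        = (Complex.exp ((((2*π*v*h : ℝ) : ℂ)) * Complex.I)
            + Complex.exp (-(((2*π*v*h : ℝ) : ℂ)) * Complex.I))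
          * ((((2*π*v)^4 + η₁*(2*π*v)^2 + 1 : ℝ)) : ℂ)⁻¹ := by ring
    rw [this, ← hcos, ← Complex.ofReal_cos]
    push_cast
    ring
  rw [setIntegral_congr_fun measurableSet_Ioi hsym, fgc_integral_ofReal] at hkey
  rw [fgcAuxG_value β₁ β₂ h hb1 hb2 hh] at hkey
  have hR := Complex.ofReal_inj.mp hkey
  -- change of variables u = 2πx
  have hcv := integral_comp_mul_left_Ioi
    (fun y : ℝ => 2 * Real.cos (y*h) * ((y^4 + η₁*y^2 + 1))⁻¹) 0
    (by positivity : (0:ℝ) < 2*π)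
  rw [mul_zero, smul_eq_mul] at hcv
  beta_reduce at hcv
  rw [hcv] at hR
  have hsimpl : ∀ y : ℝ, 2 * Real.cos (y*h) * ((y^4 + η₁*y^2 + 1))⁻¹
      = 2 * (Real.cos (h*y) / (y^4 + η₁*y^2 + 1)) := by
    intro y
    rw [mul_comm y h, div_eq_mul_inv]
    ring
  simp only [hsimpl] at hR
  rw [integral_const_mul] at hR
  -- hR : (2π)⁻¹ * (2 * L) = exp(-hβ₂)(...)
  have hπ : (0:ℝ) < π := Real.pi_pos
  have hfin : (∫ y in Ioi (0:ℝ), Real.cos (h*y) / (y^4 + η₁*y^2 + 1))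
      = π * (Real.exp (-h*β₂) * (Real.cos (h*β₁)/(4*β₂) + Real.sin (h*β₁)/(4*β₁))) := by
    rw [← hR]
    field_simp
  calc (∫ x in Set.Ioi (0:ℝ), Real.cos (h * x) / (x ^ 4 + η₁ * x ^ 2 + 1))
      = π * (Real.exp (-h*β₂) * (Real.cos (h*β₁)/(4*β₂) + Real.sin (h*β₁)/(4*β₁))) := hfin
    _ = π * Real.exp (-h * β₂) *
        (Real.cos (h * β₁) / (4 * β₂) + Real.sin (h * β₁) / (4 * β₁)) := by ring
end

section
/- Let η₁ > 2 be a real number, set Δ = √(η₁² − 4), ω₁ = √((η₁ − Δ)/2), ω₂ = √((η₁ + Δ)/2), and let h ≥ 0. Then ∫₀^∞ cos(hx)/(x⁴ + η₁x² + 1) dx = (π/Δ) [e^{−hω₁}/(2ω₁) − e^{−hω₂}/(2ω₂)]. (This is the infinite-band one-dimensional FGC-SSRF covariance for η₁ > 2: G_x(r) = (η₀/Δ)[e^{−hω₁}/(2ω₁) − e^{−hω₂}/(2ω₂)] with h = |r|/ξ.) -/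
/-!
Partial fractions write 1/(x⁴ + η₁x² + 1) as Δ⁻¹ (1/(x² + ω₁²) − 1/(x² + ω₂²)), which reduces the
claim to the Lorentzian integral ∫ cos(hx)/(x² + a²) dx = (π/a) e^{-a|h|} over ℝ. That is Fourier
inversion at h for x ↦ e^{-a|x|}, whose Fourier transform 2a/(a² + (2πξ)²) is obtained by
integrating a complex exponential over each half-line.
-/

open MeasureTheory Real

open Set Filter

open scoped FourierTransform

theorem integrable_exp_neg_mul_abs {a : ℝ} (ha : 0 < a) :
    Integrable fun x : ℝ => rexp (-(a * |x|)) := by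
  rw [← integrableOn_univ, ← Iic_union_Ioi (a := (0 : ℝ))]
  refine (integrableOn_exp_mul_Iic ha 0).congr_fun (fun x hx => ?_) measurableSet_Iic
    |>.union <| (integrableOn_exp_mul_Ioi (neg_lt_zero.2 ha) 0).congr_fun (fun x hx => ?_)
      measurableSet_Ioi
  · rw [abs_of_nonpos hx]; ring_nf
  · rw [abs_of_pos hx]; ring_nf

theorem fourier_exp_neg_mul_abs {a : ℝ} (ha : 0 < a) (w : ℝ) :
    𝓕 (fun x : ℝ => (rexp (-(a * |x|)) : ℂ)) w = (2 * a / (a ^ 2 + (2 * π * w) ^ 2) : ℝ) := by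
  set c : ℂ := 2 * π * w * Complex.I
  have hIic : EqOn
      (fun x : ℝ => Complex.exp (↑(-2 * π * x * w) * Complex.I) • (rexp (-(a * |x|)) : ℂ))
      (fun x : ℝ => Complex.exp ((a - c) * x)) (Iic 0) := by
    intro x hx
    simp only [smul_eq_mul, Complex.ofReal_exp, ← Complex.exp_add, abs_of_nonpos (mem_Iic.1 hx),
      c]
    push_cast; ring_nf
  have hIoi : EqOn
      (fun x : ℝ => Complex.exp (↑(-2 * π * x * w) * Complex.I) • (rexp (-(a * |x|)) : ℂ))
      (fun x : ℝ => Complex.exp (-(a + c) * x)) (Ioi 0) := by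
    intro x hx
    simp only [smul_eq_mul, Complex.ofReal_exp, ← Complex.exp_add, abs_of_pos (mem_Ioi.1 hx), c]
    push_cast; ring_nf
  have hre_sub : 0 < (a - c : ℂ).re := by simp [c, ha]
  have hre_add : (-(a + c) : ℂ).re < 0 := by simp [c, ha]
  rw [Real.fourier_real_eq_integral_exp_smul, ← intervalIntegral.integral_Iic_add_Ioi
      ((integrableOn_exp_mul_complex_Iic hre_sub 0).congr_fun hIic.symm measurableSet_Iic)
      ((integrableOn_exp_mul_complex_Ioi hre_add 0).congr_fun hIoi.symm measurableSet_Ioi),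
    setIntegral_congr_fun measurableSet_Iic hIic, setIntegral_congr_fun measurableSet_Ioi hIoi,
    integral_exp_mul_complex_Iic hre_sub, integral_exp_mul_complex_Ioi hre_add]
  have hsub : (a - c : ℂ) ≠ 0 := fun h => by simp [h] at hre_sub
  have hadd : (a + c : ℂ) ≠ 0 := fun h => by simp [h] at hre_add
  have hprod : ((a - c) * (a + c) : ℂ) = (a ^ 2 + (2 * π * w) ^ 2 : ℝ) := by
    simp only [c]; push_cast; linear_combination (-(2 * π * w) ^ 2 : ℂ) * Complex.I_sq
  rw [Complex.ofReal_div, ← hprod]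
  simp only [Complex.ofReal_zero, mul_zero, Complex.exp_zero]
  field_simp
  push_cast
  ring

theorem integrable_inv_sq_add_sq {a : ℝ} (ha : a ≠ 0) :
    Integrable fun x : ℝ => (x ^ 2 + a ^ 2)⁻¹ := by
  refine ((integrable_inv_one_add_sq.comp_mul_left' (inv_ne_zero ha)).const_mul (a ^ 2)⁻¹).congr
    (Eventually.of_forall fun x => ?_)
  field_simp
  ring

theorem integral_cos_mul_div_sq_add_sq {a : ℝ} (ha : 0 < a) (h : ℝ) :
    ∫ x : ℝ, cos (h * x) / (x ^ 2 + a ^ 2) = π / a * rexp (-|h| * a) := by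
  set f : ℝ → ℂ := fun x => (rexp (-(a * |x|)) : ℂ)
  set F : ℝ → ℝ := fun w => 2 * a / (a ^ 2 + (2 * π * w) ^ 2)
  have hF : 𝓕 f = fun w => (F w : ℂ) := funext (fourier_exp_neg_mul_abs ha)
  have hF_int : Integrable F := by
    refine (((integrable_inv_sq_add_sq ha.ne').comp_mul_left' two_pi_pos.ne').const_mul
      (2 * a)).congr (Eventually.of_forall fun w => ?_)
    simp only [F]
    ring
  have hinv : ∫ w, Complex.exp (↑(2 * π * w * h) * Complex.I) * F w = rexp (-|h| * a) := by
    have := (integrable_exp_neg_mul_abs ha).ofReal.fourierInv_fourier_eq (hF ▸ hF_int.ofReal)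
      (by fun_prop : Continuous f).continuousAt (v := h)
    rw [fourierInv_eq_fourier_neg, hF, fourier_real_eq_integral_exp_smul] at this
    simp only [f, neg_mul, mul_neg, neg_neg, smul_eq_mul] at this
    rw [this, mul_comm, neg_mul]
  have hcos : ∫ w, cos (2 * π * w * h) * F w = rexp (-|h| * a) := by
    have hint : Integrable fun w => Complex.exp (↑(2 * π * w * h) * Complex.I) * F w :=
      hF_int.ofReal.bdd_mul (c := 1) (by fun_prop) (Eventually.of_forall fun w => by
        rw [Complex.norm_exp_ofReal_mul_I])
    have := integral_re hint
    rw [hinv] at this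
    simpa only [RCLike.re_to_complex, Complex.re_mul_ofReal, Complex.exp_ofReal_mul_I_re,
      Complex.ofReal_re] using this
  set g : ℝ → ℝ := fun x => cos (h * x) / (x ^ 2 + a ^ 2)
  have hscale : ∫ w, g (2 * π * w) = (2 * π)⁻¹ * ∫ x, g x := by
    rw [Measure.integral_comp_mul_left, abs_of_pos (inv_pos.2 two_pi_pos), smul_eq_mul]
  have hgF : ∀ w, g (2 * π * w) = (2 * a)⁻¹ * (cos (2 * π * w * h) * F w) := fun w => by
    simp only [g, F]
    field_simp
    ring_nf
  simp only [hgF, integral_const_mul, hcos] at hscale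
  field_simp at hscale ⊢
  linarith

theorem integrable_cos_mul_div_sq_add_sq {a : ℝ} (ha : a ≠ 0) (h : ℝ) :
    Integrable fun x : ℝ => cos (h * x) / (x ^ 2 + a ^ 2) := by
  simpa only [div_eq_mul_inv] using (integrable_inv_sq_add_sq ha).bdd_mul (c := 1)
    (by fun_prop) (Eventually.of_forall fun x => by
      simpa only [norm_eq_abs] using abs_cos_le_one (h * x))

theorem integral_Ioi_cos_mul_div_sq_add_sq {a : ℝ} (ha : 0 < a) (h : ℝ) :
    ∫ x in Ioi 0, cos (h * x) / (x ^ 2 + a ^ 2) = π / (2 * a) * rexp (-|h| * a) := by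
  have heven : ∀ x : ℝ, cos (h * |x|) / (|x| ^ 2 + a ^ 2) = cos (h * x) / (x ^ 2 + a ^ 2) := by
    intro x
    rcases abs_choice x with hx | hx <;> simp only [hx, mul_neg, cos_neg, neg_sq]
  have := integral_comp_abs (f := fun x => cos (h * x) / (x ^ 2 + a ^ 2))
  simp only [heven, integral_cos_mul_div_sq_add_sq ha] at this
  field_simp at this ⊢
  linarith

theorem integral_Ioi_cos_mul_div_mul_sq_add_sq {a b : ℝ} (ha : 0 < a) (hb : 0 < b)
    (hab : a ≠ b) (h : ℝ) :
    ∫ x in Ioi 0, cos (h * x) / ((x ^ 2 + a ^ 2) * (x ^ 2 + b ^ 2)) =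
      π / (b ^ 2 - a ^ 2) * (rexp (-|h| * a) / (2 * a) - rexp (-|h| * b) / (2 * b)) := by
  have hab' : b ^ 2 - a ^ 2 ≠ 0 := by
    rw [sub_ne_zero, Ne, pow_left_inj₀ hb.le ha.le two_ne_zero]; exact hab.symm
  have hsplit : ∀ x : ℝ, cos (h * x) / ((x ^ 2 + a ^ 2) * (x ^ 2 + b ^ 2)) =
      (b ^ 2 - a ^ 2)⁻¹ * (cos (h * x) / (x ^ 2 + a ^ 2) - cos (h * x) / (x ^ 2 + b ^ 2)) := by
    intro x
    field_simp
    ring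
  simp_rw [hsplit]
  rw [integral_const_mul, integral_sub (integrable_cos_mul_div_sq_add_sq ha.ne' h).integrableOn
      (integrable_cos_mul_div_sq_add_sq hb.ne' h).integrableOn,
    integral_Ioi_cos_mul_div_sq_add_sq ha, integral_Ioi_cos_mul_div_sq_add_sq hb]
  field_simp

/-- Infinite-band 1D FGC-SSRF covariance for η₁ > 2: with Δ = √(η₁²−4),
ω₁ = √((η₁−Δ)/2), ω₂ = √((η₁+Δ)/2) and h ≥ 0,
∫₀^∞ cos(hx)/(x⁴ + η₁x² + 1) dx = (π/Δ)[e^{−hω₁}/(2ω₁) − e^{−hω₂}/(2ω₂)]. -/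
theorem fgc_ssrf_covariance_one_dim_eta_gt_two
    (η₁ : ℝ) (hη : 2 < η₁)
    (Δ ω₁ ω₂ : ℝ) (hΔ : Δ = Real.sqrt (η₁ ^ 2 - 4))
    (hω₁ : ω₁ = Real.sqrt ((η₁ - Δ) / 2)) (hω₂ : ω₂ = Real.sqrt ((η₁ + Δ) / 2))
    (h : ℝ) (hh : 0 ≤ h) :
    ∫ x in Set.Ioi (0 : ℝ), Real.cos (h * x) / (x ^ 4 + η₁ * x ^ 2 + 1) =
      (π / Δ) * (Real.exp (-h * ω₁) / (2 * ω₁) - Real.exp (-h * ω₂) / (2 * ω₂)) := by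
  have hdisc : 0 < η₁ ^ 2 - 4 := by nlinarith
  have hΔpos : 0 < Δ := hΔ ▸ sqrt_pos.2 hdisc
  have hΔsq : Δ ^ 2 = η₁ ^ 2 - 4 := hΔ ▸ sq_sqrt hdisc.le
  have hΔlt : Δ < η₁ := by nlinarith
  have hω₁sq : ω₁ ^ 2 = (η₁ - Δ) / 2 := hω₁ ▸ sq_sqrt (by linarith)
  have hω₂sq : ω₂ ^ 2 = (η₁ + Δ) / 2 := hω₂ ▸ sq_sqrt (by linarith)
  have hω₁pos : 0 < ω₁ := hω₁ ▸ sqrt_pos.2 (by linarith)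
  have hω₂pos : 0 < ω₂ := hω₂ ▸ sqrt_pos.2 (by linarith)
  have hΔω : Δ = ω₂ ^ 2 - ω₁ ^ 2 := by rw [hω₁sq, hω₂sq]; ring
  have hfactor : ∀ x : ℝ, x ^ 4 + η₁ * x ^ 2 + 1 = (x ^ 2 + ω₁ ^ 2) * (x ^ 2 + ω₂ ^ 2) := by
    intro x
    rw [hω₁sq, hω₂sq]
    linear_combination hΔsq / 4
  have hne : ω₁ ≠ ω₂ := by rintro rfl; simp only [sub_self] at hΔω; linarith
  simp_rw [hfactor]
  rw [integral_Ioi_cos_mul_div_mul_sq_add_sq hω₁pos hω₂pos hne, abs_of_nonneg hh, ← hΔω]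
end

section
/- Let η₁ be a real number with −2 < η₁ < 2, set β₁ = √(2−η₁)/2, β₂ = √(2+η₁)/2 and Δ = √(4 − η₁²), and let h ≥ 0. Then ∫₀^∞ x sin(hx)/(x⁴ + η₁x² + 1) dx = (π/Δ) sin(hβ₁) e^{−hβ₂}. (This is the infinite-band three-dimensional FGC-SSRF covariance for |η₁| < 2: G_x(r) = (η₀/(2π)) e^{−hβ₂} sin(hβ₁)/(Δ h) with h = r/ξ, a damped-oscillatory, continuous but non-differentiable covariance model.) -/
/-!
The damped sine `g(x) = sin (a x) e^{-b|x|}` (`b > 0`) is odd and integrable, and splitting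
`sin · sin` into cosines gives its Fourier transform in closed form:
`𝓕 g (ξ) = -4 i a b · u / ((b² + (u - a)²) (b² + (u + a)²))` with `u = 2πξ`.
By partial fractions this is a difference of two translated Lorentzians, hence integrable, so
Fourier inversion at `h ≥ 0` expresses `sin (a h) e^{-b h}` as the sine integral of that rational
function. For `|η₁| < 2` the quartic `x⁴ + η₁ x² + 1` is exactly this denominator with
`a = β₁`, `b = β₂`, and `4 a b = Δ`.
-/

open MeasureTheory Real

open Set FourierTransform

theorem integral_eq_integral_Ioi_add_comp_neg {E : Type*} [NormedAddCommGroup E]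
    [NormedSpace ℝ E] {F : ℝ → E} (hF : Integrable F) :
    ∫ x, F x = ∫ x in Ioi 0, (F x + F (-x)) := by
  rw [integral_add hF.integrableOn hF.comp_neg.integrableOn, integral_comp_neg_Ioi, neg_zero,
    add_comm, intervalIntegral.integral_Iic_add_Ioi hF.integrableOn hF.integrableOn]

theorem integral_exp_mul_I_mul_ofReal_of_odd {g : ℝ → ℝ} (hg : Integrable g)
    (hodd : ∀ x, g (-x) = -g x) (t : ℝ) :
    ∫ x, Complex.exp (↑(t * x) * Complex.I) * g x =
      2 * Complex.I * ↑(∫ x in Ioi 0, sin (t * x) * g x) := by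
  have hint : Integrable fun x : ℝ ↦ Complex.exp (↑(t * x) * Complex.I) * g x :=
    hg.ofReal.bdd_mul (c := 1) (by fun_prop)
      (.of_forall fun x ↦ by rw [Complex.norm_exp_ofReal_mul_I])
  rw [integral_eq_integral_Ioi_add_comp_neg hint, ← integral_complex_ofReal, ← integral_const_mul]
  congr 1 with x
  simp only [hodd, mul_neg, Complex.ofReal_neg, Complex.ofReal_mul, Complex.ofReal_sin,
    Complex.exp_mul_I, Complex.cos_neg, Complex.sin_neg]
  ring

theorem fourier_ofReal_of_odd {g : ℝ → ℝ} (hg : Integrable g) (hodd : ∀ x, g (-x) = -g x)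
    (w : ℝ) :
    𝓕 (fun x ↦ (g x : ℂ)) w = -2 * Complex.I * ↑(∫ x in Ioi 0, sin (2 * π * w * x) * g x) := by
  rw [Real.fourier_real_eq_integral_exp_smul]
  simp_rw [smul_eq_mul, show ∀ v, -2 * π * v * w = -(2 * π * w) * v from fun v ↦ by ring]
  rw [integral_exp_mul_I_mul_ofReal_of_odd hg hodd]
  simp only [neg_mul, sin_neg, integral_neg, Complex.ofReal_neg]
  ring

theorem fourierInv_ofReal_of_odd {g : ℝ → ℝ} (hg : Integrable g) (hodd : ∀ x, g (-x) = -g x)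
    (w : ℝ) :
    𝓕⁻ (fun x ↦ (g x : ℂ)) w = 2 * Complex.I * ↑(∫ x in Ioi 0, sin (2 * π * w * x) * g x) := by
  simp only [Real.fourierInv_eq_fourier_neg, fourier_ofReal_of_odd hg hodd, mul_neg, neg_mul,
    sin_neg, integral_neg, Complex.ofReal_neg]
  ring

theorem fourierInv_const_mul (c : ℂ) (f : ℝ → ℂ) (w : ℝ) :
    𝓕⁻ (fun x ↦ c * f x) w = c * 𝓕⁻ f w := by
  simp only [Real.fourierInv_eq', smul_eq_mul, mul_left_comm _ c, integral_const_mul]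

theorem exp_neg_mul_mul_cos_eq_re (a b x : ℝ) :
    exp (-b * x) * cos (a * x) = (Complex.exp ((-b + a * Complex.I) * x)).re := by
  rw [Complex.exp_re]; simp

theorem integrableOn_exp_neg_mul_mul_cos_Ioi (a : ℝ) {b : ℝ} (hb : 0 < b) :
    IntegrableOn (fun x ↦ exp (-b * x) * cos (a * x)) (Ioi 0) := by
  simp_rw [exp_neg_mul_mul_cos_eq_re]
  exact (integrableOn_exp_mul_complex_Ioi (by simpa using hb) 0).re

theorem integral_exp_neg_mul_mul_cos_Ioi (a : ℝ) {b : ℝ} (hb : 0 < b) :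
    ∫ x in Ioi 0, exp (-b * x) * cos (a * x) = b / (b ^ 2 + a ^ 2) := by
  simp_rw [exp_neg_mul_mul_cos_eq_re, ← RCLike.re_to_complex]
  rw [integral_re (integrableOn_exp_mul_complex_Ioi (by simpa using hb) 0),
    integral_exp_mul_complex_Ioi (by simpa using hb)]
  simp [Complex.div_re, Complex.normSq_apply, sq]

theorem integral_sin_mul_sin_mul_exp_neg_mul_Ioi (u a : ℝ) {b : ℝ} (hb : 0 < b) :
    ∫ x in Ioi 0, sin (u * x) * sin (a * x) * exp (-b * x) =
      2 * u * a * b / ((b ^ 2 + (u - a) ^ 2) * (b ^ 2 + (u + a) ^ 2)) := by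
  have product_to_sum : ∀ x, sin (u * x) * sin (a * x) * exp (-b * x) =
      (exp (-b * x) * cos ((u - a) * x) - exp (-b * x) * cos ((u + a) * x)) / 2 := fun x ↦ by
    rw [sub_mul, add_mul, cos_sub, cos_add]; ring
  simp_rw [product_to_sum]
  rw [integral_div, integral_sub (integrableOn_exp_neg_mul_mul_cos_Ioi _ hb)
    (integrableOn_exp_neg_mul_mul_cos_Ioi _ hb), integral_exp_neg_mul_mul_cos_Ioi _ hb,
    integral_exp_neg_mul_mul_cos_Ioi _ hb]
  field_simp
  ring

noncomputable def dampedSine (a b x : ℝ) : ℝ := sin (a * x) * exp (-b * |x|)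

theorem continuous_dampedSine (a b : ℝ) : Continuous (dampedSine a b) := by
  unfold dampedSine; fun_prop

theorem dampedSine_neg (a b x : ℝ) : dampedSine a b (-x) = -dampedSine a b x := by
  simp [dampedSine, abs_neg]

theorem integrable_exp_neg_mul_abs_s17 {b : ℝ} (hb : 0 < b) :
    Integrable fun x : ℝ ↦ exp (-b * |x|) := by
  have hIic : IntegrableOn (fun x : ℝ ↦ exp (-b * |x|)) (Iic 0) :=
    (integrableOn_exp_mul_Iic hb 0).congr_fun (fun x (hx : x ≤ 0) ↦ by simp [abs_of_nonpos hx])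
      measurableSet_Iic
  have hIoi : IntegrableOn (fun x : ℝ ↦ exp (-b * |x|)) (Ioi 0) :=
    (integrableOn_exp_mul_Ioi (neg_lt_zero.mpr hb) 0).congr_fun
      (fun x (hx : 0 < x) ↦ by simp [abs_of_pos hx]) measurableSet_Ioi
  simpa using hIic.union hIoi

theorem integrable_dampedSine (a : ℝ) {b : ℝ} (hb : 0 < b) : Integrable (dampedSine a b) :=
  (integrable_exp_neg_mul_abs_s17 hb).mono' (continuous_dampedSine a b).aestronglyMeasurable
    (.of_forall fun x ↦ by
      rw [dampedSine, norm_mul, norm_of_nonneg (exp_pos _).le]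
      exact mul_le_of_le_one_left (exp_pos _).le (abs_sin_le_one _))

/-- `u / Π(u)`, with the quartic `Π` factored through its roots `±a ± i b`. -/
noncomputable def quarticRatio (a b u : ℝ) : ℝ :=
  u / ((b ^ 2 + (u - a) ^ 2) * (b ^ 2 + (u + a) ^ 2))

theorem quarticRatio_neg (a b u : ℝ) : quarticRatio a b (-u) = -quarticRatio a b u := by
  rw [quarticRatio, quarticRatio, show -u - a = -(u + a) by ring, show -u + a = -(u - a) by ring]
  ring

theorem quarticRatio_eq_sub {a b : ℝ} (ha : a ≠ 0) (hb : b ≠ 0) (u : ℝ) :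
    quarticRatio a b u = ((b ^ 2 + (u - a) ^ 2)⁻¹ - (b ^ 2 + (u + a) ^ 2)⁻¹) / (4 * a) := by
  have : b ^ 2 + (u - a) ^ 2 ≠ 0 := by positivity
  have : b ^ 2 + (u + a) ^ 2 ≠ 0 := by positivity
  rw [quarticRatio]
  field_simp
  ring

theorem integrable_inv_sq_add_sq_s17 {b : ℝ} (hb : b ≠ 0) :
    Integrable fun v : ℝ ↦ (b ^ 2 + v ^ 2)⁻¹ := by
  refine ((integrable_inv_one_add_sq.comp_div hb).const_mul (b ^ 2)⁻¹).congr
    (.of_forall fun v ↦ ?_)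
  field_simp

theorem integrable_quarticRatio {a b : ℝ} (ha : a ≠ 0) (hb : b ≠ 0) :
    Integrable (quarticRatio a b) := by
  rw [funext (quarticRatio_eq_sub ha hb)]
  exact (((integrable_inv_sq_add_sq_s17 hb).comp_sub_right a).sub
    ((integrable_inv_sq_add_sq_s17 hb).comp_add_right a)).div_const _

theorem fourier_dampedSine (a : ℝ) {b : ℝ} (hb : 0 < b) (w : ℝ) :
    𝓕 (fun x ↦ (dampedSine a b x : ℂ)) w =
      -Complex.I * ↑(4 * a * b * quarticRatio a b (2 * π * w)) := by
  have hIoi : ∫ x in Ioi 0, sin (2 * π * w * x) * dampedSine a b x =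
      ∫ x in Ioi 0, sin (2 * π * w * x) * sin (a * x) * exp (-b * x) :=
    setIntegral_congr_fun measurableSet_Ioi fun x (hx : 0 < x) ↦ by
      rw [dampedSine, abs_of_pos hx]
      ring
  rw [fourier_ofReal_of_odd (integrable_dampedSine a hb) (dampedSine_neg a b), hIoi,
    integral_sin_mul_sin_mul_exp_neg_mul_Ioi _ _ hb, quarticRatio]
  push_cast
  ring

theorem integral_sin_mul_quarticRatio_Ioi {a b : ℝ} (ha : a ≠ 0) (hb : 0 < b) {h : ℝ}
    (hh : 0 ≤ h) :
    ∫ x in Ioi 0, sin (h * x) * quarticRatio a b x =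
      π / (4 * a * b) * sin (h * a) * exp (-h * b) := by
  set f : ℝ → ℂ := fun x ↦ dampedSine a b x
  have hG : Integrable fun ξ ↦ quarticRatio a b (2 * π * ξ) :=
    (integrable_quarticRatio ha hb.ne').comp_mul_left' (by positivity)
  have hfour : 𝓕 f = fun ξ ↦ -Complex.I * ↑(4 * a * b) * ↑(quarticRatio a b (2 * π * ξ)) :=
    funext fun ξ ↦ by rw [fourier_dampedSine a hb]; push_cast; ring
  have hinv : f h = 𝓕⁻ (𝓕 f) h :=
    (congrFun ((Complex.continuous_ofReal.comp (continuous_dampedSine a b)).fourierInv_fourier_eq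
      (integrable_dampedSine a hb).ofReal (hfour ▸ hG.ofReal.const_mul _)) h).symm
  have hsubst : ∫ ξ in Ioi 0, sin (2 * π * h * ξ) * quarticRatio a b (2 * π * ξ) =
      (2 * π)⁻¹ * ∫ x in Ioi 0, sin (h * x) * quarticRatio a b x := by
    simp_rw [show ∀ ξ, 2 * π * h * ξ = h * (2 * π * ξ) from fun ξ ↦ by ring]
    rw [integral_comp_mul_left_Ioi (fun x ↦ sin (h * x) * quarticRatio a b x) 0 (by positivity),
      mul_zero, smul_eq_mul]
  rw [hfour, fourierInv_const_mul, fourierInv_ofReal_of_odd hG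
    (fun ξ ↦ by rw [mul_neg, quarticRatio_neg]), hsubst] at hinv
  simp only [f, dampedSine, abs_of_nonneg hh] at hinv
  have hreal : sin (a * h) * exp (-b * h) =
      8 * a * b * ((2 * π)⁻¹ * ∫ x in Ioi 0, sin (h * x) * quarticRatio a b x) := by
    apply Complex.ofReal_injective
    rw [hinv]
    push_cast
    ring_nf
    rw [Complex.I_sq]
    ring
  rw [mul_comm h a, show -h * b = -b * h by ring, mul_assoc, hreal]
  field_simp
  ring

/-- Infinite-band 3D FGC-SSRF covariance for |η₁| < 2: with β₁ = √(2−η₁)/2,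
β₂ = √(2+η₁)/2, Δ = √(4−η₁²) and h ≥ 0,
∫₀^∞ x sin(hx)/(x⁴ + η₁x² + 1) dx = (π/Δ) sin(hβ₁) e^{−hβ₂}. -/
theorem fgc_ssrf_covariance_three_dim_abs_lt_two
    (η₁ : ℝ) (hη : |η₁| < 2)
    (β₁ β₂ Δ : ℝ) (hβ₁ : β₁ = Real.sqrt (2 - η₁) / 2)
    (hβ₂ : β₂ = Real.sqrt (2 + η₁) / 2) (hΔ : Δ = Real.sqrt (4 - η₁ ^ 2))
    (h : ℝ) (hh : 0 ≤ h) :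
    ∫ x in Set.Ioi (0 : ℝ), x * Real.sin (h * x) / (x ^ 4 + η₁ * x ^ 2 + 1) =
      (π / Δ) * Real.sin (h * β₁) * Real.exp (-h * β₂) := by
  obtain ⟨hη_lo, hη_hi⟩ := abs_lt.mp hη
  have h2m : 0 < 2 - η₁ := by linarith
  have h2p : 0 < 2 + η₁ := by linarith
  have hβ₁_pos : 0 < β₁ := hβ₁ ▸ by positivity
  have hβ₂_pos : 0 < β₂ := hβ₂ ▸ by positivity
  have hβ₁_sq : β₁ ^ 2 = (2 - η₁) / 4 := by rw [hβ₁, div_pow, sq_sqrt h2m.le]; norm_num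
  have hβ₂_sq : β₂ ^ 2 = (2 + η₁) / 4 := by rw [hβ₂, div_pow, sq_sqrt h2p.le]; norm_num
  have hΔ_eq : Δ = 4 * β₁ * β₂ := by
    rw [hΔ, hβ₁, hβ₂, show 4 - η₁ ^ 2 = (2 - η₁) * (2 + η₁) by ring, sqrt_mul h2m.le]
    ring
  have hquartic (x : ℝ) :
      x ^ 4 + η₁ * x ^ 2 + 1 = (β₂ ^ 2 + (x - β₁) ^ 2) * (β₂ ^ 2 + (x + β₁) ^ 2) := by
    rw [show (β₂ ^ 2 + (x - β₁) ^ 2) * (β₂ ^ 2 + (x + β₁) ^ 2) =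
      (x ^ 2 + β₁ ^ 2 + β₂ ^ 2) ^ 2 - 4 * x ^ 2 * β₁ ^ 2 by ring, hβ₁_sq, hβ₂_sq]
    ring
  calc ∫ x in Ioi 0, x * sin (h * x) / (x ^ 4 + η₁ * x ^ 2 + 1)
      = ∫ x in Ioi 0, sin (h * x) * quarticRatio β₁ β₂ x :=
        integral_congr_ae (.of_forall fun x ↦ by dsimp only; rw [quarticRatio, ← hquartic]; ring)
    _ = π / Δ * sin (h * β₁) * exp (-h * β₂) := by
        rw [integral_sin_mul_quarticRatio_Ioi hβ₁_pos.ne' hβ₂_pos hh, hΔ_eq]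
end
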